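/- arXiv:1912.01040 — 2 statements merged into one kernel-verified Lean document; each statement's English description precedes it below -/
import Mathlib

section
/- The functions f±(z₁,z₂) = z₁ ± √z₂ are (multivalued) first integrals of Γ = {y₂² = 4(y₁² + x₂)y₁²}: for a fixed branch of the square root on a simply connected domain avoiding {z₂ = 0}, each level set {z₁ + √z₂ = c} with c real is contained in Γ. -/
open Complex

/-- The Brunella Levi-flat hypersurface `Γ = {y₂² = 4(y₁² + x₂) y₁²}`. -/
def GammaB : Set (ℂ × ℂ) :=
  {p | (p.2.im) ^ 2 = 4 * ((p.1.im) ^ 2 + p.2.re) * (p.1.im) ^ 2}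

/-- `z₁ ± √z₂` is a first integral of `Γ`: for a holomorphic branch `s` of the square root
on a simply connected domain `U` avoiding `{z₂ = 0}`, every level set `{z₁ + s(z₂) = c}`
with `c` real is contained in `Γ`. -/
theorem first_integral_level_sets_in_GammaB
    (U : Set ℂ) (hU : IsOpen U) (hU0 : (0 : ℂ) ∉ U)
    (hUsc : SimplyConnectedSpace U)
    (s : ℂ → ℂ) (hs : DifferentiableOn ℂ s U) (hsq : ∀ z ∈ U, s z ^ 2 = z)
    (c : ℝ) (z₁ z₂ : ℂ) (hz₂ : z₂ ∈ U) (hlevel : z₁ + s z₂ = (c : ℂ)) :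
    (z₁, z₂) ∈ GammaB := by
  have h2 := hsq z₂ hz₂
  have him : z₁.im = -(s z₂).im := by
    have h := congrArg Complex.im hlevel
    simp [Complex.add_im] at h
    linarith
  have hre : z₂.re = (s z₂).re ^ 2 - (s z₂).im ^ 2 := by
    have := congrArg Complex.re h2
    simp [Complex.sq_norm, pow_two, Complex.mul_re] at this
    nlinarith [this]
  have him2 : z₂.im = 2 * (s z₂).re * (s z₂).im := by
    have := congrArg Complex.im h2
    simp [pow_two, Complex.mul_im] at this
    linarith
  simp only [GammaB, Set.mem_setOf_eq]
  rw [him2, him, hre]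
  ring
end

section
/- The function f(z,w) = z³/w + w³/z, defined on Γ ∖ {0} where Γ = {|z| = |w|} ⊂ ℂ², extends continuously (indeed differentiably, by setting f(0,0)=0) to all of Γ, and f is a CR function on the regular part of Γ, i.e., f is annihilated by the tangential Cauchy–Riemann operator on Γ ∖ {0}. -/
/-!
On `Γ` both terms of `z³/w + w³/z` have modulus `|z|²`, which gives the bound `|f| ≤ 2|z|²`
and hence continuity at the origin; away from it both coordinates are nonzero and `f` is a
rational function. On the leaf `w = cz` the function is `(c⁻¹ + c³) z²`, a polynomial in `z`.
-/

open Complex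

/-- The cone `Γ = {|z| = |w|} ⊂ ℂ²`. -/
def GammaCone : Set (ℂ × ℂ) := {p | ‖p.1‖ = ‖p.2‖}

/-- The function `z³/w + w³/z` on `Γ ∖ {0}`, extended by `0` at the origin. -/
noncomputable def fCR : ℂ × ℂ → ℂ :=
  fun p => if p = 0 then 0 else p.1 ^ 3 / p.2 + p.2 ^ 3 / p.1

lemma norm_pow_three_div_of_norm_eq {𝕜 : Type*} [NormedDivisionRing 𝕜] {z w : 𝕜}
    (h : ‖z‖ = ‖w‖) : ‖z ^ 3 / w‖ = ‖z‖ ^ 2 := by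
  rcases eq_or_ne z 0 with rfl | hz
  · simp
  · rw [norm_div, norm_pow, ← h, pow_succ, mul_div_cancel_right₀ _ (norm_ne_zero_iff.2 hz)]

-- The `if` in `fCR` is only cosmetic: at the origin the formula gives `0 / 0 + 0 / 0 = 0`.
lemma fCR_eq (p : ℂ × ℂ) : fCR p = p.1 ^ 3 / p.2 + p.2 ^ 3 / p.1 := by
  unfold fCR
  split_ifs with h <;> simp [h]

lemma fCR_mk_mul (c z : ℂ) (hc : c ≠ 0) : fCR (z, c * z) = (c⁻¹ + c ^ 3) * z ^ 2 := by
  rw [fCR_eq]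
  rcases eq_or_ne z 0 with rfl | hz
  · simp
  · field_simp

lemma norm_fCR_le {p : ℂ × ℂ} (hp : p ∈ GammaCone) : ‖fCR p‖ ≤ 2 * ‖p.1‖ ^ 2 := by
  have hp' : ‖p.2‖ = ‖p.1‖ := hp.symm
  calc ‖fCR p‖ ≤ ‖p.1 ^ 3 / p.2‖ + ‖p.2 ^ 3 / p.1‖ := fCR_eq p ▸ norm_add_le _ _
    _ = 2 * ‖p.1‖ ^ 2 := by
      rw [norm_pow_three_div_of_norm_eq hp, norm_pow_three_div_of_norm_eq hp', hp']
      ring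

lemma GammaCone.fst_ne_zero {p : ℂ × ℂ} (hp : p ∈ GammaCone) (h : p ≠ 0) : p.1 ≠ 0 := by
  intro h1
  have h2 : p.2 = 0 := norm_eq_zero.1 (hp ▸ norm_eq_zero.2 h1)
  exact h (Prod.ext h1 h2)

lemma GammaCone.snd_ne_zero {p : ℂ × ℂ} (hp : p ∈ GammaCone) (h : p ≠ 0) : p.2 ≠ 0 := by
  intro h2
  have h1 : p.1 = 0 := norm_eq_zero.1 (hp.symm ▸ norm_eq_zero.2 h2)
  exact h (Prod.ext h1 h2)

lemma continuousWithinAt_fCR_zero : ContinuousWithinAt fCR GammaCone 0 := by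
  have hbound : Filter.Tendsto (fun q : ℂ × ℂ => 2 * ‖q.1‖ ^ 2) (nhdsWithin 0 GammaCone)
      (nhds 0) := by
    have h := ((continuous_fst.norm.pow 2).const_mul (2 : ℝ)).tendsto (0 : ℂ × ℂ)
    simpa using h.mono_left nhdsWithin_le_nhds
  rw [ContinuousWithinAt, show fCR 0 = 0 by simp [fCR]]
  exact squeeze_zero_norm' (eventually_nhdsWithin_of_forall fun _ hp => norm_fCR_le hp) hbound

lemma continuousAt_fCR {p : ℂ × ℂ} (h1 : p.1 ≠ 0) (h2 : p.2 ≠ 0) : ContinuousAt fCR p := by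
  rw [show fCR = fun q : ℂ × ℂ => q.1 ^ 3 / q.2 + q.2 ^ 3 / q.1 from funext fCR_eq]
  fun_prop (disch := assumption)

/-- `f(z,w) = z³/w + w³/z` extends continuously (indeed differentiably, with value `0` at the
origin, thanks to the bound `|f| ≤ 2|z|²` on `Γ`) to all of `Γ = {|z| = |w|}`, and is a CR
function on the regular part `Γ ∖ {0}`: it is holomorphic along every leaf
`{(z, e^{iθ}z) : z ≠ 0}` of the Levi foliation. -/
theorem fCR_continuous_and_CR :
    ContinuousOn fCR GammaCone ∧
    (∀ p ∈ GammaCone, ‖fCR p‖ ≤ 2 * ‖p.1‖ ^ 2) ∧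
    (∀ θ : ℝ, DifferentiableOn ℂ (fun z : ℂ => fCR (z, Complex.exp (θ * I) * z))
      {z : ℂ | z ≠ 0}) := by
  refine ⟨fun p hp => ?_, fun p hp => norm_fCR_le hp, fun θ => ?_⟩
  · rcases eq_or_ne p 0 with rfl | h
    · exact continuousWithinAt_fCR_zero
    · exact (continuousAt_fCR (GammaCone.fst_ne_zero hp h)
        (GammaCone.snd_ne_zero hp h)).continuousWithinAt
  · simp_rw [fCR_mk_mul _ _ (Complex.exp_ne_zero _)]
    fun_prop
end
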